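/- arXiv:2507.13125 — 2 statements merged into one kernel-verified Lean document; each statement's English description precedes it below -/
import Mathlib

section
/- For every t1 ∈ (0, t1*) one has the identity C(t1) = 2·t1·u_max + (T(t1) − 2·t1)·u_min = −ω_min·ln((1 + (ω_max/ω_min)·tan(ω_max·t1))/(1 − (ω_max/ω_min)·tan(ω_max·t1))) + 2·ω_max²·t1; the function t1 ↦ C(t1) is differentiable on (0, t1*) with derivative C′(t1) = −2·(ω_max²/ω_min²)·(ω_min² + ω_max²)·tan²(ω_max·t1)/(1 − (ω_max²/ω_min²)·tan²(ω_max·t1)) < 0, hence strictly decreasing; since C(t1) → 0 as t1 → 0⁺, it follows that C(t1) < 0 for every t1 ∈ (0, t1*). -/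
open MeasureTheory Real Set Filter Topology

noncomputable section

/-- `t1* = (1/ω_max)·Arctan(ω_min/ω_max)` with `ω_min = √(−u_min)`, `ω_max = √u_max`. -/
def OCt1star (umin umax : ℝ) : ℝ :=
  (1 / Real.sqrt umax) * Real.arctan (Real.sqrt (-umin) / Real.sqrt umax)

/-- The period `T(t1)`. -/
def OCT (umin umax t1 : ℝ) : ℝ :=
  (1 / Real.sqrt (-umin)) *
    Real.log ((1 + (Real.sqrt umax / Real.sqrt (-umin)) * Real.tan (Real.sqrt umax * t1)) /
              (1 - (Real.sqrt umax / Real.sqrt (-umin)) * Real.tan (Real.sqrt umax * t1)))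
  + 2 * t1

/-- The optimal cost `C(t1) = 2·t1·u_max + (T(t1) − 2·t1)·u_min`. -/
def OCC (umin umax t1 : ℝ) : ℝ := 2 * t1 * umax + (OCT umin umax t1 - 2 * t1) * umin

/-- The explicit bang-bang control `u*` on `[0, T]`. -/
def OCustar (umin umax t1 T : ℝ) (t : ℝ) : ℝ :=
  if t1 < t ∧ t < T - t1 then umin else umax

/-- The explicit trajectory `x*` on `[0, T]`. -/
def OCxstar (umin umax t1 T : ℝ) (t : ℝ) : ℝ :=
  if t ≤ t1 then Real.cos (Real.sqrt umax * t)
  else if t ≤ T - t1 then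
    Real.cos (Real.sqrt umax * t1) * Real.cosh (Real.sqrt (-umin) * (t - t1))
      - (Real.sqrt umax / Real.sqrt (-umin)) * Real.sin (Real.sqrt umax * t1) *
        Real.sinh (Real.sqrt (-umin) * (t - t1))
  else Real.cos (Real.sqrt umax * (T - t))

/-! Writing `ω_min² = −u_min`, `ω_max² = u_max` and `x = (ω_max/ω_min)·tan(ω_max·t1)`, the cost is
`C = 2·ω_max²·t1 − ω_min·log((1 + x)/(1 − x))`. Since `log((1 + x)/(1 − x))' = 2x'/(1 − x²)` and
`tan' = 1 + tan²`, this gives `C' = 2ω_max²·(1 − (1 + tan²)/(1 − x²))`, which is negative as soon as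
`0 < x < 1`. On `[0, t1*)` we have `0 ≤ x < 1`, so `C` is differentiable on this interval and
strictly decreasing there, whence `C(t1) < C(0) = 0`. -/

theorem hasDerivAt_log_one_add_div_one_sub {x : ℝ} (h₁ : 1 + x ≠ 0) (h₂ : 1 - x ≠ 0) :
    HasDerivAt (fun y => log ((1 + y) / (1 - y))) (2 / ((1 + x) * (1 - x))) x := by
  have hquot : HasDerivAt (fun y => (1 + y) / (1 - y)) (2 / (1 - x) ^ 2) x :=
    (((hasDerivAt_id' x).const_add 1).div ((hasDerivAt_id' x).const_sub 1) h₂).congr_deriv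
      (by ring)
  refine (hquot.log (div_ne_zero h₁ h₂)).congr_deriv ?_
  field_simp

theorem hasDerivAt_tan_const_mul {ω t : ℝ} (h : cos (ω * t) ≠ 0) :
    HasDerivAt (fun t => tan (ω * t)) (ω * (1 + tan (ω * t) ^ 2)) t := by
  refine ((hasDerivAt_tan h).comp t ((hasDerivAt_id t).const_mul ω)).congr_deriv ?_
  rw [one_div, ← inv_one_add_tan_sq h, inv_inv]
  ring

theorem tan_mem_Ico_of_mem_Ico_arctan {x c : ℝ} (hx : x ∈ Ico 0 (arctan c)) :
    tan x ∈ Ico 0 c := by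
  have hx_lt : x < π / 2 := hx.2.trans (arctan_lt_pi_div_two c)
  refine ⟨tan_nonneg_of_nonneg_of_le_pi_div_two hx.1 hx_lt.le, ?_⟩
  simpa only [tan_arctan] using
    tan_lt_tan_of_nonneg_of_lt_pi_div_two hx.1 (arctan_lt_pi_div_two c) hx.2

/-- `C(t1)` written in terms of `ω_min = √(−u_min)` and `ω_max = √u_max`. -/
def freqCost (ωmin ωmax t : ℝ) : ℝ :=
  -ωmin * log ((1 + (ωmax / ωmin) * tan (ωmax * t)) / (1 - (ωmax / ωmin) * tan (ωmax * t)))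
    + 2 * ωmax ^ 2 * t

def freqCostDeriv (ωmin ωmax t : ℝ) : ℝ :=
  -2 * (ωmax ^ 2 / ωmin ^ 2) * (ωmin ^ 2 + ωmax ^ 2) * tan (ωmax * t) ^ 2 /
    (1 - (ωmax ^ 2 / ωmin ^ 2) * tan (ωmax * t) ^ 2)

section freqCost

variable {ωmin ωmax t : ℝ}

theorem hasDerivAt_freqCost (hωmin : ωmin ≠ 0) (hcos : cos (ωmax * t) ≠ 0)
    (h₁ : 1 + (ωmax / ωmin) * tan (ωmax * t) ≠ 0) (h₂ : 1 - (ωmax / ωmin) * tan (ωmax * t) ≠ 0) :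
    HasDerivAt (freqCost ωmin ωmax) (freqCostDeriv ωmin ωmax t) t := by
  have hratio := ((hasDerivAt_log_one_add_div_one_sub h₁ h₂).comp t
    ((hasDerivAt_tan_const_mul hcos).const_mul (ωmax / ωmin))).const_mul (-ωmin)
  refine (hratio.add ((hasDerivAt_id t).const_mul (2 * ωmax ^ 2))).congr_deriv ?_
  rw [freqCostDeriv]
  generalize tan (ωmax * t) = s at h₁ h₂ ⊢
  obtain ⟨a, rfl⟩ : ∃ a, ωmax = a * ωmin := ⟨ωmax / ωmin, (div_mul_cancel₀ _ hωmin).symm⟩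
  rw [mul_div_cancel_right₀ _ hωmin] at h₁ h₂ ⊢
  rw [mul_pow, mul_div_cancel_right₀ _ (pow_ne_zero 2 hωmin),
    show 1 - a ^ 2 * s ^ 2 = (1 + a * s) * (1 - a * s) by ring]
  field_simp
  ring

theorem freqCostDeriv_neg (hωmin : ωmin ≠ 0) (hωmax : ωmax ≠ 0) (htan : tan (ωmax * t) ≠ 0)
    (hlt : (ωmax ^ 2 / ωmin ^ 2) * tan (ωmax * t) ^ 2 < 1) :
    freqCostDeriv ωmin ωmax t < 0 := by
  refine div_neg_of_neg_of_pos ?_ (sub_pos.2 hlt)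
  have : 0 < 2 * (ωmax ^ 2 / ωmin ^ 2) * (ωmin ^ 2 + ωmax ^ 2) * tan (ωmax * t) ^ 2 := by
    positivity
  linarith

end freqCost

section OCC

variable {umin umax : ℝ}

theorem OCC_eq_freqCost (humin : umin ≤ 0) (humax : 0 ≤ umax) :
    OCC umin umax = freqCost (√(-umin)) (√umax) := by
  funext t
  have hsq : 1 / √(-umin) * umin = -√(-umin) := by
    have key (ω : ℝ) : 1 / ω * -(ω * ω) = -ω := by
      rw [one_div_mul_eq_div, neg_div, mul_self_div_self]
    simpa only [mul_self_sqrt (neg_nonneg.2 humin), neg_neg] using key √(-umin)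
  rw [OCC, OCT, freqCost, sq_sqrt humax, add_sub_cancel_right,
    mul_right_comm (1 / √(-umin)), hsq]
  ring

theorem OCC_zero : OCC umin umax 0 = 0 := by
  simp [OCC, OCT]

theorem OCt1star_pos (humin : umin < 0) (humax : 0 < umax) : 0 < OCt1star umin umax := by
  have hωmin : 0 < √(-umin) := sqrt_pos.2 (neg_pos.2 humin)
  have hωmax : 0 < √umax := sqrt_pos.2 humax
  exact mul_pos (by positivity) (arctan_pos.2 (by positivity))

theorem mul_mem_Ico_arctan_of_mem_Ico_OCt1star (humax : 0 < umax) {t : ℝ}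
    (ht : t ∈ Ico 0 (OCt1star umin umax)) :
    √umax * t ∈ Ico 0 (arctan (√(-umin) / √umax)) := by
  have hωmax : 0 < √umax := sqrt_pos.2 humax
  refine ⟨mul_nonneg hωmax.le ht.1, ?_⟩
  calc √umax * t < √umax * OCt1star umin umax := mul_lt_mul_of_pos_left ht.2 hωmax
    _ = arctan (√(-umin) / √umax) := by rw [OCt1star]; field_simp

theorem tan_ratio_mem_Ico_of_mem_Ico_OCt1star (humin : umin < 0) (humax : 0 < umax) {t : ℝ}
    (ht : t ∈ Ico 0 (OCt1star umin umax)) :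
    (√umax / √(-umin)) * tan (√umax * t) ∈ Ico 0 1 := by
  have hωmin : 0 < √(-umin) := sqrt_pos.2 (neg_pos.2 humin)
  have hωmax : 0 < √umax := sqrt_pos.2 humax
  obtain ⟨htan_nonneg, htan_lt⟩ :=
    tan_mem_Ico_of_mem_Ico_arctan (mul_mem_Ico_arctan_of_mem_Ico_OCt1star humax ht)
  refine ⟨by positivity, ?_⟩
  rwa [← lt_div_iff₀' (by positivity), one_div_div]

theorem OCC_hasDerivAt (humin : umin < 0) (humax : 0 < umax) {t : ℝ}
    (ht : t ∈ Ico 0 (OCt1star umin umax)) :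
    HasDerivAt (OCC umin umax) (freqCostDeriv (√(-umin)) (√umax) t) t := by
  have hθ := mul_mem_Ico_arctan_of_mem_Ico_OCt1star humax ht
  have hcos : 0 < cos (√umax * t) := cos_pos_of_mem_Ioo
    ⟨by linarith [pi_pos, hθ.1], hθ.2.trans (arctan_lt_pi_div_two _)⟩
  obtain ⟨hx_nonneg, hx_lt⟩ := tan_ratio_mem_Ico_of_mem_Ico_OCt1star humin humax ht
  rw [OCC_eq_freqCost humin.le humax.le]
  exact hasDerivAt_freqCost (sqrt_pos.2 (neg_pos.2 humin)).ne' hcos.ne'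
    (by linarith : (0 : ℝ) < _).ne' (by linarith : (0 : ℝ) < _).ne'

theorem freqCostDeriv_neg_of_mem_Ioo_OCt1star (humin : umin < 0) (humax : 0 < umax) {t : ℝ}
    (ht : t ∈ Ioo 0 (OCt1star umin umax)) :
    freqCostDeriv (√(-umin)) (√umax) t < 0 := by
  have hωmax : 0 < √umax := sqrt_pos.2 humax
  have hθ := mul_mem_Ico_arctan_of_mem_Ico_OCt1star humax (Ioo_subset_Ico_self ht)
  have htan : 0 < tan (√umax * t) := tan_pos_of_pos_of_lt_pi_div_two (mul_pos hωmax ht.1)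
    (hθ.2.trans (arctan_lt_pi_div_two _))
  obtain ⟨hx_nonneg, hx_lt⟩ :=
    tan_ratio_mem_Ico_of_mem_Ico_OCt1star humin humax (Ioo_subset_Ico_self ht)
  refine freqCostDeriv_neg (sqrt_pos.2 (neg_pos.2 humin)).ne' hωmax.ne' htan.ne' ?_
  rw [← div_pow, ← mul_pow]
  exact pow_lt_one₀ hx_nonneg hx_lt two_ne_zero

end OCC

/-- The identity for `C(t1)`, its explicit negative derivative on `(0, t1*)`, strict
decrease, limit `0` at `0⁺`, and negativity of `C` on `(0, t1*)`. -/
theorem C_identity_strictAnti_neg (umin umax : ℝ) (humin : umin < 0) (humax : 0 < umax) :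
    (∀ t1 ∈ Ioo 0 (OCt1star umin umax),
      OCC umin umax t1 =
        -Real.sqrt (-umin) *
          Real.log ((1 + (Real.sqrt umax / Real.sqrt (-umin)) *
              Real.tan (Real.sqrt umax * t1)) /
            (1 - (Real.sqrt umax / Real.sqrt (-umin)) * Real.tan (Real.sqrt umax * t1)))
          + 2 * Real.sqrt umax ^ 2 * t1) ∧
    (∀ t1 ∈ Ioo 0 (OCt1star umin umax),
      HasDerivAt (OCC umin umax)
        (-2 * (Real.sqrt umax ^ 2 / Real.sqrt (-umin) ^ 2) *
          (Real.sqrt (-umin) ^ 2 + Real.sqrt umax ^ 2) *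
          Real.tan (Real.sqrt umax * t1) ^ 2 /
          (1 - (Real.sqrt umax ^ 2 / Real.sqrt (-umin) ^ 2) *
            Real.tan (Real.sqrt umax * t1) ^ 2)) t1 ∧
      -2 * (Real.sqrt umax ^ 2 / Real.sqrt (-umin) ^ 2) *
          (Real.sqrt (-umin) ^ 2 + Real.sqrt umax ^ 2) *
          Real.tan (Real.sqrt umax * t1) ^ 2 /
          (1 - (Real.sqrt umax ^ 2 / Real.sqrt (-umin) ^ 2) *
            Real.tan (Real.sqrt umax * t1) ^ 2) < 0) ∧
    StrictAntiOn (OCC umin umax) (Ioo 0 (OCt1star umin umax)) ∧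
    Tendsto (OCC umin umax) (nhdsWithin 0 (Ioi 0)) (nhds 0) ∧
    (∀ t1 ∈ Ioo 0 (OCt1star umin umax), OCC umin umax t1 < 0) := by
  have hpos := OCt1star_pos humin humax
  have hderiv : ∀ t ∈ Ico 0 (OCt1star umin umax),
      HasDerivAt (OCC umin umax) (freqCostDeriv (√(-umin)) (√umax) t) t :=
    fun _ => OCC_hasDerivAt humin humax
  have hanti : StrictAntiOn (OCC umin umax) (Ico 0 (OCt1star umin umax)) := by
    refine strictAntiOn_of_deriv_neg (convex_Ico _ _)
      (fun t ht => (hderiv t ht).continuousAt.continuousWithinAt) fun t ht => ?_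
    rw [interior_Ico] at ht
    rw [(hderiv t (Ioo_subset_Ico_self ht)).deriv]
    exact freqCostDeriv_neg_of_mem_Ioo_OCt1star humin humax ht
  have hcont : Tendsto (OCC umin umax) (𝓝 0) (𝓝 0) := by
    simpa only [OCC_zero] using (hderiv 0 ⟨le_rfl, hpos⟩).continuousAt.tendsto
  refine ⟨fun t _ => congrFun (OCC_eq_freqCost humin.le humax.le) t,
    fun t ht => ⟨hderiv t (Ioo_subset_Ico_self ht),
      freqCostDeriv_neg_of_mem_Ioo_OCt1star humin humax ht⟩,
    hanti.mono Ioo_subset_Ico_self, hcont.mono_left nhdsWithin_le_nhds, fun t ht => ?_⟩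
  simpa only [OCC_zero] using hanti ⟨le_rfl, hpos⟩ (Ioo_subset_Ico_self ht) ht.1

end
end

section
/- Let t1 ∈ (0, t1*) and T = T(t1), and set c(t1) = cos²(ω_max·t1)·(1 − (ω_max²/ω_min²)·tan²(ω_max·t1)). Then c(t1) > 0 and the explicit trajectory satisfies √(c(t1)) ≤ x*(t) ≤ 1 for every t ∈ [0, T], with x*(0) = x*(T) = 1 (the maximal value) and x*(T/2) = √(c(t1)) (the minimal value); in particular 0 < x*(t) ≤ 1 on [0, T]. Moreover x*(t)² + y*(t)²/ω_max² = 1 for every t ∈ [0, t1] ∪ [T − t1, T] (arc of ellipse), and x*(t)² − y*(t)²/ω_min² = c(t1) for every t ∈ [t1, T − t1] (arc of hyperbola). -/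
/-!
Write `a = ω_max`, `b = ω_min` and `k = (a/b)·tan(a·t₁)`, which lies in `(0, 1)` because
`t₁ < t₁*`. The formula for `T` says exactly that `b·(T/2 − t₁) = artanh k`, so with
`A = cos(a·t₁)·√(1 − k²) = √c` the addition formula for `cosh` turns the middle branch of `x*`
into `A·cosh(b·(t − T/2))`. In this form `x*` is symmetric about `T/2` and matches `cos(a·t)` to
first order at `t₁`; the conic identities are `cos² + sin² = 1` and `cosh² − sinh² = 1`, and the
bounds follow from the monotonicity of `cos` on `[0, π]` and of `cosh` in `|·|`.
-/

open MeasureTheory Real Set Filter Topology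

noncomputable section

theorem hasDerivAt_of_hasDerivWithinAt_Iic_Ici {E : Type*} [NormedAddCommGroup E]
    [NormedSpace ℝ E] {f : ℝ → E} {f' : E} {x : ℝ}
    (hl : HasDerivWithinAt f f' (Iic x) x) (hr : HasDerivWithinAt f f' (Ici x) x) :
    HasDerivAt f f' x := by
  simpa [Iic_union_Ici] using hl.union hr

theorem hasDerivAt_cos_mul (a t : ℝ) : HasDerivAt (fun s ↦ cos (a * s)) (-a * sin (a * t)) t := by
  refine ((hasDerivAt_id' t).const_mul a).cos.congr_deriv ?_
  ring

theorem hasDerivAt_mul_cosh_mul_sub (A b c t : ℝ) :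
    HasDerivAt (fun s ↦ A * cosh (b * (s - c))) (A * b * sinh (b * (t - c))) t := by
  refine ((((hasDerivAt_id' t).sub_const c).const_mul b).cosh.const_mul A).congr_deriv ?_
  ring

def conicPath (a b t₁ T A t : ℝ) : ℝ :=
  if t ≤ t₁ then cos (a * t)
  else if t ≤ T - t₁ then A * cosh (b * (t - T / 2))
  else cos (a * (T - t))

namespace conicPath

variable {a b t₁ T A t : ℝ}

theorem of_le (ht : t ≤ t₁) : conicPath a b t₁ T A t = cos (a * t) := if_pos ht

theorem of_mem_Ioc (ht : t ∈ Ioc t₁ (T - t₁)) :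
    conicPath a b t₁ T A t = A * cosh (b * (t - T / 2)) := by
  rw [conicPath, if_neg ht.1.not_ge, if_pos ht.2]

theorem of_sub_lt (ht : T - t₁ < t) (ht₁ : t₁ ≤ T - t₁) :
    conicPath a b t₁ T A t = cos (a * (T - t)) := by
  rw [conicPath, if_neg (by linarith), if_neg ht.not_ge]

theorem of_mem_Icc (hA : A * cosh (b * (T / 2 - t₁)) = cos (a * t₁))
    (ht : t ∈ Icc t₁ (T - t₁)) : conicPath a b t₁ T A t = A * cosh (b * (t - T / 2)) := by
  rcases ht.1.eq_or_lt with rfl | ht₁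
  · rw [of_le le_rfl, ← hA, ← cosh_neg]
    ring_nf
  · exact of_mem_Ioc ⟨ht₁, ht.2⟩

theorem reflect (hA : A * cosh (b * (T / 2 - t₁)) = cos (a * t₁)) (ht₁ : t₁ ≤ T - t₁) (t : ℝ) :
    conicPath a b t₁ T A (T - t) = conicPath a b t₁ T A t := by
  rcases lt_or_ge t t₁ with ht | ht
  · rw [of_sub_lt (by linarith) ht₁, of_le ht.le, sub_sub_cancel]
  rcases le_or_gt t (T - t₁) with ht' | ht'
  · rw [of_mem_Icc hA ⟨ht, ht'⟩, of_mem_Icc hA ⟨by linarith, by linarith⟩, ← cosh_neg]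
    ring_nf
  · rw [of_le (by linarith), of_sub_lt ht' ht₁]

theorem deriv_reflect (hA : A * cosh (b * (T / 2 - t₁)) = cos (a * t₁)) (ht₁ : t₁ ≤ T - t₁)
    (t : ℝ) : deriv (conicPath a b t₁ T A) (T - t) = -deriv (conicPath a b t₁ T A) t := by
  have hsymm : (fun s ↦ conicPath a b t₁ T A (T - s)) = conicPath a b t₁ T A :=
    funext (reflect hA ht₁)
  rw [← hsymm, deriv_comp_const_sub, sub_sub_cancel, hsymm]

theorem hasDerivAt_of_lt (ht : t < t₁) :
    HasDerivAt (conicPath a b t₁ T A) (-a * sin (a * t)) t :=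
  (hasDerivAt_cos_mul a t).congr_of_eventuallyEq <| by
    filter_upwards [Iio_mem_nhds ht] with s hs using of_le hs.le

theorem hasDerivAt_of_mem_Ioo (ht : t ∈ Ioo t₁ (T - t₁)) :
    HasDerivAt (conicPath a b t₁ T A) (A * b * sinh (b * (t - T / 2))) t :=
  (hasDerivAt_mul_cosh_mul_sub A b (T / 2) t).congr_of_eventuallyEq <| by
    filter_upwards [Ioo_mem_nhds ht.1 ht.2] with s hs using of_mem_Ioc ⟨hs.1, hs.2.le⟩

theorem hasDerivAt_junction (hA : A * cosh (b * (T / 2 - t₁)) = cos (a * t₁))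
    (hA' : A * b * sinh (b * (T / 2 - t₁)) = a * sin (a * t₁)) (ht₁ : t₁ < T - t₁) :
    HasDerivAt (conicPath a b t₁ T A) (-a * sin (a * t₁)) t₁ := by
  refine hasDerivAt_of_hasDerivWithinAt_Iic_Ici
    ((hasDerivAt_cos_mul a t₁).hasDerivWithinAt.congr_of_mem (fun _ ↦ of_le) self_mem_Iic) ?_
  have hslope : A * b * sinh (b * (t₁ - T / 2)) = -a * sin (a * t₁) := by
    rw [← neg_sub, mul_neg, sinh_neg, mul_neg, hA', neg_mul]
  rw [← hslope]
  refine (hasDerivAt_mul_cosh_mul_sub A b (T / 2) t₁).hasDerivWithinAt.congr_of_eventuallyEq ?_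
    (of_mem_Icc hA ⟨le_rfl, ht₁.le⟩)
  filter_upwards [Icc_mem_nhdsGE ht₁] with s hs using of_mem_Icc hA hs

theorem deriv_of_le (hA : A * cosh (b * (T / 2 - t₁)) = cos (a * t₁))
    (hA' : A * b * sinh (b * (T / 2 - t₁)) = a * sin (a * t₁)) (ht₁ : t₁ < T - t₁)
    (ht : t ≤ t₁) : deriv (conicPath a b t₁ T A) t = -a * sin (a * t) := by
  rcases ht.lt_or_eq with ht | rfl
  · exact (hasDerivAt_of_lt ht).deriv
  · exact (hasDerivAt_junction hA hA' ht₁).deriv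

theorem deriv_of_mem_Icc (hA : A * cosh (b * (T / 2 - t₁)) = cos (a * t₁))
    (hA' : A * b * sinh (b * (T / 2 - t₁)) = a * sin (a * t₁)) (ht₁ : t₁ < T - t₁)
    (ht : t ∈ Icc t₁ (T - t₁)) :
    deriv (conicPath a b t₁ T A) t = A * b * sinh (b * (t - T / 2)) := by
  rcases ht.1.eq_or_lt with rfl | hl
  · rw [deriv_of_le hA hA' ht₁ le_rfl, ← neg_sub, mul_neg, sinh_neg, mul_neg, hA', neg_mul]
  rcases ht.2.eq_or_lt with rfl | hr
  · rw [deriv_reflect hA ht₁.le, deriv_of_le hA hA' ht₁ le_rfl, neg_mul, neg_neg, ← hA']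
    ring_nf
  · exact (hasDerivAt_of_mem_Ioo ⟨hl, hr⟩).deriv

theorem sq_add_deriv_sq_div_sq (ha : a ≠ 0) (hA : A * cosh (b * (T / 2 - t₁)) = cos (a * t₁))
    (hA' : A * b * sinh (b * (T / 2 - t₁)) = a * sin (a * t₁)) (ht₁ : t₁ < T - t₁)
    (ht : t ≤ t₁ ∨ T - t₁ ≤ t) :
    conicPath a b t₁ T A t ^ 2 + deriv (conicPath a b t₁ T A) t ^ 2 / a ^ 2 = 1 := by
  wlog ht' : t ≤ t₁ generalizing t
  · rw [← sub_sub_cancel T t, reflect hA ht₁.le, deriv_reflect hA ht₁.le, neg_sq]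
    have hs : T - t ≤ t₁ := by linarith [ht.resolve_left ht']
    exact this (.inl hs) hs
  rw [of_le ht', deriv_of_le hA hA' ht₁ ht']
  field_simp
  linear_combination sin_sq_add_cos_sq (a * t)

theorem sq_sub_deriv_sq_div_sq (hb : b ≠ 0) (hA : A * cosh (b * (T / 2 - t₁)) = cos (a * t₁))
    (hA' : A * b * sinh (b * (T / 2 - t₁)) = a * sin (a * t₁)) (ht₁ : t₁ < T - t₁)
    (ht : t ∈ Icc t₁ (T - t₁)) :
    conicPath a b t₁ T A t ^ 2 - deriv (conicPath a b t₁ T A) t ^ 2 / b ^ 2 = A ^ 2 := by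
  rw [of_mem_Icc hA ht, deriv_of_mem_Icc hA hA' ht₁ ht]
  generalize b * (t - T / 2) = u
  field_simp
  linear_combination A ^ 2 * cosh_sq_sub_sinh_sq u

theorem mem_Icc (hA₀ : 0 ≤ A) (ha : 0 ≤ a) (hat : a * t₁ ≤ π)
    (hA : A * cosh (b * (T / 2 - t₁)) = cos (a * t₁)) (ht₁ : t₁ ≤ T - t₁) (ht : t ∈ Icc 0 T) :
    conicPath a b t₁ T A t ∈ Icc A 1 := by
  wlog h : t ≤ T - t₁ generalizing t
  · rw [← reflect hA ht₁]
    exact this ⟨by linarith [ht.2], by linarith [ht.1]⟩ (by linarith)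
  have hcos : A ≤ cos (a * t₁) := hA ▸ le_mul_of_one_le_right hA₀ (one_le_cosh _)
  rcases le_or_gt t t₁ with ht' | ht'
  · rw [of_le ht']
    exact ⟨hcos.trans (cos_le_cos_of_nonneg_of_le_pi (mul_nonneg ha ht.1) hat
      (mul_le_mul_of_nonneg_left ht' ha)), cos_le_one _⟩
  rw [of_mem_Ioc ⟨ht', h⟩]
  refine ⟨le_mul_of_one_le_right hA₀ (one_le_cosh _), le_trans ?_ (hA ▸ cos_le_one _)⟩
  refine mul_le_mul_of_nonneg_left (cosh_le_cosh.2 ?_) hA₀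
  rw [abs_mul, abs_mul, abs_of_nonneg (by linarith : 0 ≤ T / 2 - t₁)]
  exact mul_le_mul_of_nonneg_left (abs_le.2 ⟨by linarith, by linarith⟩) (abs_nonneg b)

theorem apply_zero (ht₁ : 0 ≤ t₁) : conicPath a b t₁ T A 0 = 1 := by
  rw [of_le ht₁, mul_zero, cos_zero]

theorem apply_self (hA : A * cosh (b * (T / 2 - t₁)) = cos (a * t₁)) (ht₁ : 0 ≤ t₁)
    (ht₁' : t₁ ≤ T - t₁) : conicPath a b t₁ T A T = 1 := by
  have h := reflect hA ht₁' 0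
  rwa [sub_zero, apply_zero ht₁] at h

theorem apply_half (hA : A * cosh (b * (T / 2 - t₁)) = cos (a * t₁)) (ht₁ : t₁ ≤ T - t₁) :
    conicPath a b t₁ T A (T / 2) = A := by
  rw [of_mem_Icc hA ⟨by linarith, by linarith⟩, sub_self, mul_zero, cosh_zero, mul_one]

end conicPath

theorem sqrt_one_sub_sq_mul_cosh_artanh {k : ℝ} (hk : k ∈ Ioo (-1) 1) :
    √(1 - k ^ 2) * cosh (artanh k) = 1 := by
  have : 0 < 1 - k ^ 2 := by nlinarith [hk.1, hk.2]
  rw [cosh_artanh hk, mul_one_div_cancel (sqrt_pos.2 this).ne']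

theorem sqrt_one_sub_sq_mul_sinh_artanh {k : ℝ} (hk : k ∈ Ioo (-1) 1) :
    √(1 - k ^ 2) * sinh (artanh k) = k := by
  have : 0 < 1 - k ^ 2 := by nlinarith [hk.1, hk.2]
  rw [sinh_artanh hk, mul_div_cancel₀ _ (sqrt_pos.2 this).ne']

theorem cos_mul_sqrt_one_sub_sq_mul_sinh_artanh {a b θ : ℝ} (hb : b ≠ 0) (hθ : cos θ ≠ 0)
    (hk : a / b * tan θ ∈ Ioo (-1) 1) :
    cos θ * √(1 - (a / b * tan θ) ^ 2) * b * sinh (artanh (a / b * tan θ)) = a * sin θ := by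
  calc cos θ * √(1 - (a / b * tan θ) ^ 2) * b * sinh (artanh (a / b * tan θ))
      = cos θ * b * (√(1 - (a / b * tan θ) ^ 2) * sinh (artanh (a / b * tan θ))) := by ring
    _ = a * sin θ := by
      rw [sqrt_one_sub_sq_mul_sinh_artanh hk, tan_eq_sin_div_cos]
      field_simp

section

variable {umin umax t1 T A : ℝ}

theorem OCxstar_eq_conicPath (hb : √(-umin) ≠ 0)
    (hA : A * cosh (√(-umin) * (T / 2 - t1)) = cos (√umax * t1))
    (hA' : A * √(-umin) * sinh (√(-umin) * (T / 2 - t1)) = √umax * sin (√umax * t1)) :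
    OCxstar umin umax t1 T = conicPath √umax √(-umin) t1 T A := by
  funext t
  unfold OCxstar conicPath
  split_ifs
  · rfl
  · rw [show √(-umin) * (t - T / 2) = √(-umin) * (t - t1) - √(-umin) * (T / 2 - t1) by ring,
      cosh_sub, ← hA, div_mul_eq_mul_div, ← hA']
    field_simp
  · rfl

theorem mul_lt_arctan_of_lt_OCt1star (humax : 0 < umax) (h : t1 < OCt1star umin umax) :
    √umax * t1 < arctan (√(-umin) / √umax) := by
  rwa [OCt1star, one_div_mul_eq_div, lt_div_iff₀' (sqrt_pos.2 humax)] at h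

theorem sqrt_div_sqrt_mul_tan_mem_Ioo (humin : umin < 0) (humax : 0 < umax)
    (ht1 : t1 ∈ Ioo 0 (OCt1star umin umax)) :
    √umax / √(-umin) * tan (√umax * t1) ∈ Ioo 0 1 := by
  have ha : 0 < √umax := sqrt_pos.2 humax
  have hb : 0 < √(-umin) := sqrt_pos.2 (neg_pos.2 humin)
  have hlt := mul_lt_arctan_of_lt_OCt1star humax ht1.2
  have hpos : 0 < √umax * t1 := mul_pos ha ht1.1
  have htan_lt : tan (√umax * t1) < √(-umin) / √umax := by
    simpa only [tan_arctan] using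
      tan_lt_tan_of_nonneg_of_lt_pi_div_two hpos.le (arctan_lt_pi_div_two _) hlt
  refine ⟨mul_pos (div_pos ha hb) (tan_pos_of_pos_of_lt_pi_div_two hpos
    (hlt.trans (arctan_lt_pi_div_two _))), ?_⟩
  calc √umax / √(-umin) * tan (√umax * t1) < √umax / √(-umin) * (√(-umin) / √umax) :=
        mul_lt_mul_of_pos_left htan_lt (div_pos ha hb)
    _ = 1 := by field_simp

theorem sqrt_mul_OCT_div_two_sub_eq_artanh (hb : √(-umin) ≠ 0)
    (hk : √umax / √(-umin) * tan (√umax * t1) ∈ Icc (-1) 1) :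
    √(-umin) * (OCT umin umax t1 / 2 - t1) = artanh (√umax / √(-umin) * tan (√umax * t1)) := by
  rw [OCT, artanh_eq_half_log hk]
  field_simp
  ring

end

/-- Bounds and conic identities for the explicit trajectory: with
`c(t1) = cos²(ω_max·t1)·(1 − (ω_max²/ω_min²)·tan²(ω_max·t1)) > 0`, one has
`√(c(t1)) ≤ x*(t) ≤ 1` on `[0, T]`, with extremal values `x*(0) = x*(T) = 1` and
`x*(T/2) = √(c(t1))`; moreover `x*² + y*²/ω_max² = 1` on `[0, t1] ∪ [T − t1, T]`
(ellipse) and `x*² − y*²/ω_min² = c(t1)` on `[t1, T − t1]` (hyperbola). -/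
theorem explicit_trajectory_bounds_and_conics (umin umax : ℝ)
    (humin : umin < 0) (humax : 0 < umax)
    (t1 : ℝ) (ht1 : t1 ∈ Ioo 0 (OCt1star umin umax)) (T : ℝ) (hT : T = OCT umin umax t1)
    (c : ℝ) (hc : c = Real.cos (Real.sqrt umax * t1) ^ 2 *
      (1 - (Real.sqrt umax ^ 2 / Real.sqrt (-umin) ^ 2) *
        Real.tan (Real.sqrt umax * t1) ^ 2)) :
    0 < c ∧
    (∀ t ∈ Icc (0:ℝ) T, Real.sqrt c ≤ OCxstar umin umax t1 T t ∧
      OCxstar umin umax t1 T t ≤ 1) ∧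
    (∀ t ∈ Icc (0:ℝ) T, 0 < OCxstar umin umax t1 T t) ∧
    OCxstar umin umax t1 T 0 = 1 ∧ OCxstar umin umax t1 T T = 1 ∧
    OCxstar umin umax t1 T (T / 2) = Real.sqrt c ∧
    (∀ t ∈ Icc (0:ℝ) t1 ∪ Icc (T - t1) T,
      OCxstar umin umax t1 T t ^ 2 +
        deriv (OCxstar umin umax t1 T) t ^ 2 / Real.sqrt umax ^ 2 = 1) ∧
    (∀ t ∈ Icc t1 (T - t1),
      OCxstar umin umax t1 T t ^ 2 -
        deriv (OCxstar umin umax t1 T) t ^ 2 / Real.sqrt (-umin) ^ 2 = c) := by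
  have ha : 0 < √umax := sqrt_pos.2 humax
  have hb : 0 < √(-umin) := sqrt_pos.2 (neg_pos.2 humin)
  have hat : √umax * t1 < π / 2 :=
    (mul_lt_arctan_of_lt_OCt1star humax ht1.2).trans (arctan_lt_pi_div_two _)
  have hcos : 0 < cos (√umax * t1) := cos_pos_of_mem_Ioo ⟨by nlinarith [ht1.1, pi_pos], hat⟩
  set k := √umax / √(-umin) * tan (√umax * t1) with hk_def
  have hk : k ∈ Ioo 0 1 := sqrt_div_sqrt_mul_tan_mem_Ioo humin humax ht1
  have hk' : k ∈ Ioo (-1) 1 := ⟨by linarith [hk.1], hk.2⟩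
  have hm : √(-umin) * (T / 2 - t1) = artanh k :=
    hT ▸ sqrt_mul_OCT_div_two_sub_eq_artanh hb.ne' (Ioo_subset_Icc_self hk')
  have ht1T : t1 < T - t1 := by nlinarith [artanh_pos hk]
  set A := cos (√umax * t1) * √(1 - k ^ 2)
  have hA : A * cosh (√(-umin) * (T / 2 - t1)) = cos (√umax * t1) := by
    rw [hm, mul_assoc, sqrt_one_sub_sq_mul_cosh_artanh hk', mul_one]
  have hA' : A * √(-umin) * sinh (√(-umin) * (T / 2 - t1)) = √umax * sin (√umax * t1) :=
    hm ▸ cos_mul_sqrt_one_sub_sq_mul_sinh_artanh hb.ne' hcos.ne' hk'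
  have hk2 : 0 < 1 - k ^ 2 := by nlinarith [hk.1, hk.2]
  have hA₀ : 0 < A := mul_pos hcos (sqrt_pos.2 hk2)
  have hcA : c = A ^ 2 := by rw [hc, mul_pow, sq_sqrt hk2.le, hk_def, mul_pow, div_pow]
  rw [OCxstar_eq_conicPath hb.ne' hA hA', hcA, sqrt_sq hA₀.le]
  have hbounds t (ht : t ∈ Icc 0 T) :=
    conicPath.mem_Icc hA₀.le ha.le (by linarith [pi_pos]) hA ht1T.le ht
  exact ⟨by positivity, hbounds, fun t ht ↦ hA₀.trans_le (hbounds t ht).1,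
    conicPath.apply_zero ht1.1.le, conicPath.apply_self hA ht1.1.le ht1T.le,
    conicPath.apply_half hA ht1T.le,
    fun t ht ↦ conicPath.sq_add_deriv_sq_div_sq ha.ne' hA hA' ht1T (ht.imp (·.2) (·.1)),
    fun t ht ↦ conicPath.sq_sub_deriv_sq_div_sq hb.ne' hA hA' ht1T ht⟩

end
end
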